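/- arXiv:1412.7802 — 4 statements merged into one kernel-verified Lean document; each statement's English description precedes it below -/
import Mathlib

section
/- The graded tensor product of Clifford algebras over a field F satisfies Cl(V ⊕ V', Q ⊕ Q') ≅ Cl(V,Q) ⊗̂ Cl(V',Q') (Chevalley's theorem), where ⊗̂ denotes the ℤ/2-graded tensor product. -/
open CliffordAlgebra

/-- **Chevalley's theorem**: the Clifford algebra of an orthogonal direct sum of quadratic
spaces is naturally isomorphic to the ℤ/2-graded tensor product of the Clifford algebras
of the summands (with respect to their even-odd gradings). -/
theorem chevalley_graded_tensor (F : Type*) [Field F] (V V' : Type*)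
    [AddCommGroup V] [Module F V] [AddCommGroup V'] [Module F V']
    (Q : QuadraticForm F V) (Q' : QuadraticForm F V') :
    Nonempty (CliffordAlgebra (Q.prod Q') ≃ₐ[F]
      GradedTensorProduct F (CliffordAlgebra.evenOdd Q) (CliffordAlgebra.evenOdd Q')) := by
  exact ⟨CliffordAlgebra.prodEquiv Q Q'⟩
end

section
/- If Cl(V,Q) is a real Clifford algebra with dim V even and the volume element ω satisfies ω² = 1 (positive type), then Cl(V ⊕ V', Q ⊕ Q') ≅ Cl(V,Q) ⊗ Cl(V',Q') as an ungraded tensor product; if ω² = −1 (negative type), then Cl(V ⊕ V', Q ⊕ Q') ≅ Cl(V,Q) ⊗ Cl(V',−Q'). -/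
/-!
Karoubi's trick. Let `ω ∈ Cl(Q)` be even, anticommute with `V`, and satisfy `ω² = ε = ±1`.
Then `v ↦ ι v ⊗ 1` and `w ↦ ω ⊗ ι w` anticommute, and square to `Q v` and `ω² ⊗ (ε Q') w = Q' w`,
so they define `Cl(Q ⊕ Q') → Cl(Q) ⊗ Cl(ε Q')`. The inverse is `x ↦ x` on `Cl(Q)` and
`ι w ↦ ε ω ι(0, w)` on `Cl(ε Q')`; the two images commute because the even element `ω`
commutes with `ι(0, w)` while `ι(v, 0)` anticommutes with both `ω` and `ι(0, w)`.

For `ω = e₁⋯eₙ` with `n` even, each `eᵢ` passes `ω` with sign `(-1)^(n-1) = -1`, as it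
anticommutes with the other `n - 1` factors.
-/

open CliffordAlgebra

/-- The quadratic form of signature `(p,q)` on `ℝ^{p+q}`:
`x₁² + … + x_p² − x_{p+1}² − … − x_{p+q}²`. -/
noncomputable abbrev Qpq (p q : ℕ) : QuadraticForm ℝ (Fin (p + q) → ℝ) :=
  QuadraticMap.weightedSumSquares ℝ (fun i : Fin (p + q) => if (i : ℕ) < p then (1 : ℝ) else -1)

/-- The real Clifford algebra `Cl_{p,q}`. -/
noncomputable abbrev Cl (p q : ℕ) := CliffordAlgebra (Qpq p q)

/-- The canonical generators `e_i` of `Cl_{p,q}`. -/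
noncomputable def gen (p q : ℕ) (i : Fin (p + q)) : Cl p q :=
  CliffordAlgebra.ι (Qpq p q) (Pi.single i 1)

/-- The volume element `ω = e₁e₂⋯e_{p+q}` of `Cl_{p,q}`. -/
noncomputable def vol (p q : ℕ) : Cl p q := (List.ofFn (gen p q)).prod

open scoped TensorProduct

theorem mul_list_prod_ofFn_of_mul_eq_smul {R A : Type*} [CommSemiring R] [Semiring A]
    [Algebra R A] {n : ℕ} {x : A} {a : Fin n → A} {c : Fin n → R}
    (h : ∀ j, x * a j = c j • (a j * x)) :
    x * (List.ofFn a).prod = (∏ j, c j) • ((List.ofFn a).prod * x) := by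
  induction n with
  | zero => simp
  | succ n ih =>
    rw [List.ofFn_succ, List.prod_cons, Fin.prod_univ_succ, ← mul_assoc, h,
      smul_mul_assoc, mul_assoc, ih fun j => h j.succ, mul_smul_comm, smul_smul, mul_assoc]

theorem QuadraticMap.isOrtho_weightedSumSquares_single {ι R : Type*} [Fintype ι] [DecidableEq ι]
    [CommRing R] (w : ι → R) {i j : ι} (hij : i ≠ j) (a b : R) :
    (weightedSumSquares R w).IsOrtho (Pi.single i a) (Pi.single j b) := by
  rw [isOrtho_def]
  simp only [weightedSumSquares_apply, ← Finset.sum_add_distrib]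
  refine Finset.sum_congr rfl fun k _ => ?_
  rcases eq_or_ne k i with rfl | hki <;> simp [*, Pi.single_apply]

namespace CliffordAlgebra

variable {R M : Type*} [CommRing R] [AddCommGroup M] [Module R M] {Q : QuadraticForm R M}
  {n : ℕ} {b : Fin n → M}

theorem prod_ofFn_ι_mem_evenOdd_zero (hn : Even n) :
    (List.ofFn (ι Q ∘ b)).prod ∈ evenOdd Q 0 := by
  have h := SetLike.list_prod_ofFn_mem_graded (A := evenOdd Q) (fun _ => 1) (ι Q ∘ b)
    fun j => ι_mem_evenOdd_one Q (b j)
  simpa [ZMod.natCast_eq_zero_iff_even.mpr hn] using h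

theorem ι_mul_prod_ofFn_ι_of_isOrtho (hn : Even n)
    (hb : Pairwise fun i j => Q.IsOrtho (b i) (b j)) (i : Fin n) :
    ι Q (b i) * (List.ofFn (ι Q ∘ b)).prod = -((List.ofFn (ι Q ∘ b)).prod * ι Q (b i)) := by
  rw [mul_list_prod_ofFn_of_mul_eq_smul (c := fun j => if j = i then (1 : R) else -1)]
  · have hodd : Odd (n - 1) := Nat.Even.sub_odd i.pos hn odd_one
    simp [Finset.prod_ite, Finset.filter_ne', hodd.neg_one_pow]
  · intro j
    split_ifs with hji
    · rw [hji, one_smul, Function.comp_apply]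
    · rw [Function.comp_apply, ι_mul_ι_comm_of_isOrtho (hb (Ne.symm hji)), neg_one_smul]

theorem ι_mul_prod_ofFn_ι_of_span_eq_top (hn : Even n)
    (hb : Pairwise fun i j => Q.IsOrtho (b i) (b j))
    (hspan : Submodule.span R (Set.range b) = ⊤) (v : M) :
    ι Q v * (List.ofFn (ι Q ∘ b)).prod = -((List.ofFn (ι Q ∘ b)).prod * ι Q v) := by
  have hv : v ∈ Submodule.span R (Set.range b) := hspan ▸ Submodule.mem_top
  induction hv using Submodule.span_induction with
  | mem _ hx =>
    obtain ⟨i, rfl⟩ := hx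
    exact ι_mul_prod_ofFn_ι_of_isOrtho hn hb i
  | zero => simp
  | add x y _ _ hx hy => rw [map_add, add_mul, mul_add, hx, hy, neg_add]
  | smul r x _ hx => rw [map_smul, smul_mul_assoc, hx, mul_smul_comm, smul_neg]

theorem commute_of_commute_ι {M₂ A : Type*} [AddCommGroup M₂] [Module R M₂] [Ring A]
    [Algebra R A] {Q₂ : QuadraticForm R M₂} (f : CliffordAlgebra Q →ₐ[R] A)
    (g : CliffordAlgebra Q₂ →ₐ[R] A) (h : ∀ v w, Commute (f (ι Q v)) (g (ι Q₂ w)))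
    (x : CliffordAlgebra Q) (y : CliffordAlgebra Q₂) : Commute (f x) (g y) := by
  induction x using CliffordAlgebra.induction with
  | algebraMap r => rw [AlgHom.commutes]; exact Algebra.commute_algebraMap_left r _
  | add a b ha hb => rw [map_add]; exact ha.add_left hb
  | mul a b ha hb => rw [map_mul]; exact ha.mul_left hb
  | ι v =>
    induction y using CliffordAlgebra.induction with
    | algebraMap r => rw [AlgHom.commutes]; exact Algebra.commute_algebraMap_right r _
    | add a b ha hb => rw [map_add]; exact ha.add_right hb
    | mul a b ha hb => rw [map_mul]; exact ha.mul_right hb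
    | ι w => exact h v w

variable (Q) in
/-- The properties of the volume element `e₁⋯eₙ` (`n` even) on which Karoubi's argument rests. -/
structure IsVolumeElement (ω : CliffordAlgebra Q) (ε : R) : Prop where
  mem_evenOdd_zero : ω ∈ evenOdd Q 0
  ι_mul : ∀ v, ι Q v * ω = -(ω * ι Q v)
  mul_self : ω * ω = algebraMap R _ ε
  sign_mul_self : ε * ε = 1

theorem isVolumeElement_prod_ofFn (hn : Even n)
    (hb : Pairwise fun i j => Q.IsOrtho (b i) (b j))
    (hspan : Submodule.span R (Set.range b) = ⊤) {ε : R}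
    (hsq : (List.ofFn (ι Q ∘ b)).prod * (List.ofFn (ι Q ∘ b)).prod = algebraMap R _ ε)
    (hε : ε * ε = 1) :
    IsVolumeElement Q (List.ofFn (ι Q ∘ b)).prod ε where
  mem_evenOdd_zero := prod_ofFn_ι_mem_evenOdd_zero hn
  ι_mul := ι_mul_prod_ofFn_ι_of_span_eq_top hn hb hspan
  mul_self := hsq
  sign_mul_self := hε

namespace IsVolumeElement

open Algebra.TensorProduct (includeLeft)

variable {M' : Type*} [AddCommGroup M'] [Module R M'] {ω : CliffordAlgebra Q} {ε : R}
  (Q' : QuadraticForm R M')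

theorem tmul_add_tmul_mul_self (hω : IsVolumeElement Q ω ε) (v : M) (w : M') :
    (ι Q v ⊗ₜ[R] 1 + ω ⊗ₜ[R] ι (ε • Q') w) * (ι Q v ⊗ₜ[R] 1 + ω ⊗ₜ[R] ι (ε • Q') w) =
      algebraMap R (CliffordAlgebra Q ⊗[R] CliffordAlgebra (ε • Q')) (Q v + Q' w) := by
  have hcross :
      ι Q v ⊗ₜ[R] 1 * ω ⊗ₜ[R] ι (ε • Q') w + ω ⊗ₜ ι (ε • Q') w * ι Q v ⊗ₜ[R] 1 = 0 := by
    rw [Algebra.TensorProduct.tmul_mul_tmul, Algebra.TensorProduct.tmul_mul_tmul, one_mul,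
      mul_one, ← TensorProduct.add_tmul, hω.ι_mul, neg_add_cancel, TensorProduct.zero_tmul]
  have expand : ∀ s t : CliffordAlgebra Q ⊗[R] CliffordAlgebra (ε • Q'),
      (s + t) * (s + t) = s * s + t * t + (s * t + t * s) := fun s t => by noncomm_ring
  rw [expand, hcross, add_zero, Algebra.TensorProduct.tmul_mul_tmul,
    Algebra.TensorProduct.tmul_mul_tmul, ι_sq_scalar, ι_sq_scalar, hω.mul_self, one_mul,
    smul_apply, smul_eq_mul, map_add, Algebra.algebraMap_eq_smul_one ε,
    Algebra.algebraMap_eq_smul_one (ε * _), TensorProduct.smul_tmul_smul, ← mul_assoc,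
    hω.sign_mul_self, one_mul, ← Algebra.TensorProduct.one_def, ← Algebra.algebraMap_eq_smul_one,
    Algebra.TensorProduct.algebraMap_apply, Algebra.TensorProduct.algebraMap_apply]

noncomputable def toTensor (hω : IsVolumeElement Q ω ε) :
    CliffordAlgebra (Q.prod Q') →ₐ[R] CliffordAlgebra Q ⊗[R] CliffordAlgebra (ε • Q') :=
  lift _ ⟨(includeLeft.toLinearMap ∘ₗ ι Q).coprod (TensorProduct.mk R _ _ ω ∘ₗ ι (ε • Q')),
    fun ⟨v, w⟩ => hω.tmul_add_tmul_mul_self Q' v w⟩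

theorem toTensor_ι (hω : IsVolumeElement Q ω ε) (v : M) (w : M') :
    hω.toTensor Q' (ι _ (v, w)) = ι Q v ⊗ₜ 1 + ω ⊗ₜ ι (ε • Q') w :=
  lift_ι_apply _ _ _

theorem toTensor_comp_map_inl (hω : IsVolumeElement Q ω ε) :
    (hω.toTensor Q').comp (map (QuadraticMap.Isometry.inl Q Q')) = includeLeft := by
  ext v
  simp [toTensor_ι]

theorem map_inl_mul_self (hω : IsVolumeElement Q ω ε) :
    map (QuadraticMap.Isometry.inl Q Q') ω * map (QuadraticMap.Isometry.inl Q Q') ω =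
      algebraMap R _ ε := by
  rw [← map_mul, hω.mul_self, AlgHom.commutes]

theorem ι_inl_mul_map_inl (hω : IsVolumeElement Q ω ε) (v : M) :
    ι (Q.prod Q') (v, 0) * map (QuadraticMap.Isometry.inl Q Q') ω =
      -(map (QuadraticMap.Isometry.inl Q Q') ω * ι (Q.prod Q') (v, 0)) := by
  simpa using congrArg (map (QuadraticMap.Isometry.inl Q Q')) (hω.ι_mul v)

theorem commute_map_inl_ι_inr (hω : IsVolumeElement Q ω ε) (w : M') :
    Commute (map (QuadraticMap.Isometry.inl Q Q') ω) (ι (Q.prod Q') (0, w)) := by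
  simpa using commute_map_mul_map_of_isOrtho_of_mem_evenOdd_zero_left _
    (QuadraticMap.Isometry.inr Q Q') QuadraticMap.IsOrtho.inl_inr _ _ hω.mem_evenOdd_zero
    (ι_mem_evenOdd_one Q' w)

theorem smul_map_inl_mul_ι_inr_mul_self (hω : IsVolumeElement Q ω ε) (w : M') :
    ε • (map (QuadraticMap.Isometry.inl Q Q') ω * ι _ (0, w)) *
        (ε • (map (QuadraticMap.Isometry.inl Q Q') ω * ι _ (0, w))) =
      algebraMap R _ ((ε • Q') w) := by
  rw [smul_mul_smul_comm, hω.sign_mul_self, one_smul, mul_assoc, ← mul_assoc (ι _ (0, w)),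
    ← (hω.commute_map_inl_ι_inr Q' w).eq, mul_assoc, ← mul_assoc, hω.map_inl_mul_self,
    ι_sq_scalar, ← map_mul, QuadraticMap.prod_apply, map_zero, zero_add, smul_apply,
    smul_eq_mul]

noncomputable def twistedInr (hω : IsVolumeElement Q ω ε) :
    CliffordAlgebra (ε • Q') →ₐ[R] CliffordAlgebra (Q.prod Q') :=
  lift _ ⟨ε • LinearMap.mulLeft R (map (QuadraticMap.Isometry.inl Q Q') ω) ∘ₗ
      ι (Q.prod Q') ∘ₗ LinearMap.inr R M M', hω.smul_map_inl_mul_ι_inr_mul_self Q'⟩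

theorem twistedInr_ι (hω : IsVolumeElement Q ω ε) (w : M') :
    hω.twistedInr Q' (ι _ w) = ε • (map (QuadraticMap.Isometry.inl Q Q') ω * ι _ (0, w)) :=
  lift_ι_apply _ _ _

theorem commute_map_inl_twistedInr (hω : IsVolumeElement Q ω ε) (x : CliffordAlgebra Q)
    (y : CliffordAlgebra (ε • Q')) :
    Commute (map (QuadraticMap.Isometry.inl Q Q') x) (hω.twistedInr Q' y) := by
  refine commute_of_commute_ι _ _ (fun v w => ?_) x y
  rw [map_apply_ι, twistedInr_ι]
  refine Commute.smul_right ?_ ε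
  show ι _ (v, 0) * (_ * ι _ (0, w)) = (_ * ι _ (0, w)) * ι _ (v, 0)
  rw [← mul_assoc, hω.ι_inl_mul_map_inl, neg_mul, mul_assoc,
    ι_mul_ι_comm_of_isOrtho (QuadraticMap.IsOrtho.inl_inr v w), mul_neg, neg_neg, ← mul_assoc]

noncomputable def ofTensor (hω : IsVolumeElement Q ω ε) :
    CliffordAlgebra Q ⊗[R] CliffordAlgebra (ε • Q') →ₐ[R] CliffordAlgebra (Q.prod Q') :=
  Algebra.TensorProduct.lift _ _ (hω.commute_map_inl_twistedInr Q')

theorem toTensor_comp_ofTensor (hω : IsVolumeElement Q ω ε) :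
    (hω.toTensor Q').comp (hω.ofTensor Q') = AlgHom.id _ _ := by
  ext v
  · simp [ofTensor, toTensor_ι]
  · have hΩ := DFunLike.congr_fun (hω.toTensor_comp_map_inl Q') ω
    simp only [AlgHom.comp_apply, Algebra.TensorProduct.includeLeft_apply] at hΩ
    simp [ofTensor, toTensor_ι, twistedInr_ι, hΩ, hω.mul_self, Algebra.algebraMap_eq_smul_one,
      ← TensorProduct.smul_tmul', smul_smul, hω.sign_mul_self]

theorem ofTensor_comp_toTensor (hω : IsVolumeElement Q ω ε) :
    (hω.ofTensor Q').comp (hω.toTensor Q') = AlgHom.id _ _ := by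
  ext v
  · simp [ofTensor, toTensor_ι]
  · simp [ofTensor, toTensor_ι, twistedInr_ι, ← mul_assoc, hω.map_inl_mul_self Q',
      ← Algebra.smul_def, smul_smul, hω.sign_mul_self]

noncomputable def prodEquivTensor (hω : IsVolumeElement Q ω ε) :
    CliffordAlgebra (Q.prod Q') ≃ₐ[R] CliffordAlgebra Q ⊗[R] CliffordAlgebra (ε • Q') :=
  AlgEquiv.ofAlgHom _ _ (hω.toTensor_comp_ofTensor Q') (hω.ofTensor_comp_toTensor Q')

end IsVolumeElement

end CliffordAlgebra

theorem isVolumeElement_vol {p q : ℕ} (hpq : Even (p + q)) {ε : ℝ}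
    (hsq : vol p q * vol p q = algebraMap ℝ (Cl p q) ε) (hε : ε * ε = 1) :
    IsVolumeElement (Qpq p q) (vol p q) ε :=
  isVolumeElement_prod_ofFn hpq
    (fun _ _ hij => QuadraticMap.isOrtho_weightedSumSquares_single _ hij 1 1)
    (by rw [← (Pi.basisFun ℝ (Fin (p + q))).span_eq]; congr!; simp) hsq hε

/-- **Karoubi's theorem**: if `dim V` is even and the volume element ω of `Cl_{p,q}`
satisfies ω² = 1 (positive type), then `Cl(V ⊕ V', Q ⊕ Q') ≅ Cl(V,Q) ⊗ Cl(V',Q')`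
as an ungraded tensor product; if ω² = −1 (negative type), then
`Cl(V ⊕ V', Q ⊕ Q') ≅ Cl(V,Q) ⊗ Cl(V',−Q')`. -/
theorem karoubi_tensor_factorization (p q : ℕ) (hpq : Even (p + q))
    (V' : Type*) [AddCommGroup V'] [Module ℝ V'] (Q' : QuadraticForm ℝ V') :
    (vol p q * vol p q = 1 →
      Nonempty (CliffordAlgebra ((Qpq p q).prod Q') ≃ₐ[ℝ]
        (Cl p q ⊗[ℝ] CliffordAlgebra Q'))) ∧
    (vol p q * vol p q = -1 →
      Nonempty (CliffordAlgebra ((Qpq p q).prod Q') ≃ₐ[ℝ]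
        (Cl p q ⊗[ℝ] CliffordAlgebra (-Q')))) := by
  have key : ∀ ε : ℝ, ε * ε = 1 → vol p q * vol p q = algebraMap ℝ _ ε →
      Nonempty (CliffordAlgebra ((Qpq p q).prod Q') ≃ₐ[ℝ]
        (Cl p q ⊗[ℝ] CliffordAlgebra (ε • Q'))) :=
    fun ε hε hsq => ⟨(isVolumeElement_vol hpq hsq hε).prodEquivTensor Q'⟩
  refine ⟨fun h => ?_, fun h => ?_⟩
  · obtain ⟨e⟩ := key 1 (one_mul 1) (by rw [h, map_one])
    rw [show (1 : ℝ) • Q' = Q' from one_smul ℝ Q'] at e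
    exact ⟨e⟩
  · obtain ⟨e⟩ := key (-1) (by norm_num) (by rw [h, map_neg, map_one])
    rw [show (-1 : ℝ) • Q' = -Q' from neg_one_smul ℝ Q'] at e
    exact ⟨e⟩
end

section
/- The similarity classes of real graded central simple Clifford algebras Cl_{p,q}, where Cl_{p,q} and Cl_{p',q'} are in the same class iff p + q' ≡ p' + q (mod 8), form a group under graded tensor product isomorphic to ℤ/8 (the real Brauer–Wall group). -/
/-- The **real Brauer–Wall group**: the similarity classes of real graded central simple
Clifford algebras `Cl_{p,q}` (where `(p,q)` and `(p',q')` are equivalent iff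
`p + q' ≡ p' + q (mod 8)`, and the graded tensor product corresponds to addition of
signatures) form a group isomorphic to `ℤ/8`, generated by the class of `Cl_{0,1}`.
This is expressed by an additive monoid homomorphism `f : ℕ × ℕ →+ ℤ/8` which is
surjective, identifies exactly the pairs in the same similarity class, and whose value
on `(0,1)` generates `ℤ/8`. -/
theorem brauer_wall_group_real :
    ∃ f : ℕ × ℕ →+ ZMod 8,
      Function.Surjective f ∧
      (∀ a b : ℕ × ℕ, f a = f b ↔ (a.1 + b.2) % 8 = (b.1 + a.2) % 8) ∧
      AddSubgroup.zmultiples (f (0, 1)) = ⊤ := by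
  refine ⟨{ toFun := fun p => (p.1 : ZMod 8) - (p.2 : ZMod 8),
            map_zero' := by simp,
            map_add' := by intro a b; simp [Prod.fst_add, Prod.snd_add]; ring }, ?_, ?_, ?_⟩
  · intro x
    exact ⟨(x.val, 0), by simp [ZMod.natCast_val]⟩
  · intro a b
    simp only [AddMonoidHom.coe_mk, ZeroHom.coe_mk]
    rw [sub_eq_sub_iff_add_eq_add]
    constructor
    · intro h
      have : ((a.1 + b.2 : ℕ) : ZMod 8) = ((b.1 + a.2 : ℕ) : ZMod 8) := by push_cast; linear_combination h
      exact (ZMod.natCast_eq_natCast_iff _ _ _).mp this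
    · intro h
      have := (ZMod.natCast_eq_natCast_iff (a.1 + b.2) (b.1 + a.2) 8).mpr h
      push_cast at this
      linear_combination this
  · simp only [AddMonoidHom.coe_mk, ZeroHom.coe_mk]
    rw [AddSubgroup.eq_top_iff']
    intro x
    rw [AddSubgroup.mem_zmultiples_iff]
    refine ⟨-(x.val : ℤ), ?_⟩
    rw [zsmul_eq_mul]
    push_cast
    rw [ZMod.natCast_val, ZMod.cast_id]
    ring
end

section
/- For each A ∈ SL(2,ℂ), the transformation X ↦ A X A* on Hermitian 2×2 matrices corresponds to a Lorentz transformation of ℝ^{1,3} (preserves the Minkowski form); moreover A₁, A₂ ∈ SL(2,ℂ) induce the same transformation if and only if A₁ = ±A₂, giving a two-to-one homomorphism SL(2,ℂ) → O(1,3). -/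
/-!
`det (X(x)) = Q(x)` and every Hermitian matrix is some `X(y)`; since `A X Aᴴ` is Hermitian with
determinant `det X` when `det A = 1`, the congruence by `A` is a Lorentz transformation.
If `A₁` and `A₂` induce the same congruence on Hermitian matrices, they do so on all matrices
(write `X = ℜ X + i ℑ X`), so `C = A₂⁻¹ A₁` satisfies `C X Cᴴ = X` for every `X`. Taking `X = 1`
gives `Cᴴ = C⁻¹`, so `C` commutes with every matrix and is a central element of `SL(2, ℂ)`,
i.e. a scalar `r` with `r² = 1`.
-/

open scoped Matrix

noncomputable def toMat (x : Fin 4 → ℝ) : Matrix (Fin 2) (Fin 2) ℂ :=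
  !![((x 0 + x 3 : ℝ) : ℂ), ((x 1 : ℝ) : ℂ) - ((x 2 : ℝ) : ℂ) * Complex.I;
     ((x 1 : ℝ) : ℂ) + ((x 2 : ℝ) : ℂ) * Complex.I, ((x 0 - x 3 : ℝ) : ℂ)]

open Matrix ComplexStarModule

theorem det_toMat (x : Fin 4 → ℝ) :
    (toMat x).det = ((x 0 ^ 2 - x 1 ^ 2 - x 2 ^ 2 - x 3 ^ 2 : ℝ) : ℂ) := by
  simp only [toMat, det_fin_two_of]
  push_cast
  linear_combination (↑(x 2) : ℂ) ^ 2 * Complex.I_sq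

theorem isHermitian_toMat (x : Fin 4 → ℝ) : (toMat x).IsHermitian := by
  ext i j
  fin_cases i <;> fin_cases j <;> simp [toMat, Complex.ext_iff]

theorem exists_toMat_eq_of_isHermitian {Y : Matrix (Fin 2) (Fin 2) ℂ} (hY : Y.IsHermitian) :
    ∃ y : Fin 4 → ℝ, toMat y = Y := by
  have h00 : (Y 0 0).im = 0 := Complex.conj_eq_iff_im.mp (hY.apply 0 0)
  have h11 : (Y 1 1).im = 0 := Complex.conj_eq_iff_im.mp (hY.apply 1 1)
  have h01 : Y 0 1 = starRingEnd ℂ (Y 1 0) := by simpa using (hY.apply 0 1).symm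
  refine ⟨![((Y 0 0).re + (Y 1 1).re) / 2, (Y 1 0).re, (Y 1 0).im,
    ((Y 0 0).re - (Y 1 1).re) / 2], ?_⟩
  ext i j
  fin_cases i <;> fin_cases j <;> simp [toMat, h01, Complex.ext_iff, h00, h11] <;> ring

section

variable {n : Type*} [Fintype n]

theorem Matrix.mul_mul_conjTranspose_eq_of_forall_isHermitian {B₁ B₂ : Matrix n n ℂ}
    (h : ∀ X : Matrix n n ℂ, X.IsHermitian → B₁ * X * B₁ᴴ = B₂ * X * B₂ᴴ)
    (X : Matrix n n ℂ) : B₁ * X * B₁ᴴ = B₂ * X * B₂ᴴ := by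
  rw [← realPart_add_I_smul_imaginaryPart X]
  simp only [Matrix.mul_add, Matrix.add_mul, Matrix.mul_smul, Matrix.smul_mul]
  rw [h _ (ℜ X).2, h _ (ℑ X).2]

theorem Matrix.commute_of_forall_mul_mul_conjTranspose_eq_self [DecidableEq n] {R : Type*}
    [CommRing R] [StarRing R] {C : Matrix n n R} (hC : ∀ X, C * X * Cᴴ = X) (X : Matrix n n R) :
    Commute C X := by
  have hCC : Cᴴ * C = 1 := mul_eq_one_comm.mp (by simpa using hC 1)
  calc C * X = C * X * Cᴴ * C := by rw [Matrix.mul_assoc _ Cᴴ, hCC, Matrix.mul_one]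
    _ = X * C := by rw [hC]

namespace Matrix.SpecialLinearGroup

variable [DecidableEq n] {R : Type*} [CommRing R] [StarRing R]

local notation:1024 "↑ₘ" A:1024 => ((A : SpecialLinearGroup n R) : Matrix n n R)

theorem det_mul_mul_conjTranspose (A : SpecialLinearGroup n R) (X : Matrix n n R) :
    (↑ₘA * X * (↑ₘA)ᴴ).det = X.det := by
  rw [det_mul, det_mul, det_conjTranspose, A.det_coe, star_one, one_mul, mul_one]

theorem mem_center_of_forall_mul_mul_conjTranspose_eq_self {C : SpecialLinearGroup n R}
    (hC : ∀ X, ↑ₘC * X * (↑ₘC)ᴴ = X) :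
    C ∈ Subgroup.center (SpecialLinearGroup n R) :=
  Subgroup.mem_center_iff.mpr fun B =>
    Subtype.ext (commute_of_forall_mul_mul_conjTranspose_eq_self hC B).symm.eq

theorem exists_eq_smul_of_forall_mul_mul_conjTranspose_eq {A₁ A₂ : SpecialLinearGroup n R}
    (h : ∀ X, ↑ₘA₁ * X * (↑ₘA₁)ᴴ = ↑ₘA₂ * X * (↑ₘA₂)ᴴ) :
    ∃ r : R, r ^ Fintype.card n = 1 ∧ ↑ₘA₁ = r • ↑ₘA₂ := by
  set C := A₂⁻¹ * A₁
  have hinv : ↑ₘA₂⁻¹ * ↑ₘA₂ = 1 := by rw [← coe_mul, inv_mul_cancel, coe_one]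
  have hC : ∀ X, ↑ₘC * X * (↑ₘC)ᴴ = X := fun X => by
    calc ↑ₘC * X * (↑ₘC)ᴴ = ↑ₘA₂⁻¹ * (↑ₘA₁ * X * (↑ₘA₁)ᴴ) * (↑ₘA₂⁻¹)ᴴ := by
          simp only [C, coe_mul, conjTranspose_mul, Matrix.mul_assoc]
      _ = (↑ₘA₂⁻¹ * ↑ₘA₂) * X * (↑ₘA₂⁻¹ * ↑ₘA₂)ᴴ := by
          rw [h, conjTranspose_mul]; simp only [Matrix.mul_assoc]
      _ = X := by rw [hinv, conjTranspose_one, Matrix.one_mul, Matrix.mul_one]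
  obtain ⟨r, hr, hrC⟩ := mem_center_iff.mp (mem_center_of_forall_mul_mul_conjTranspose_eq_self hC)
  refine ⟨r, hr, ?_⟩
  rw [← mul_inv_cancel_left A₂ A₁, coe_mul, ← hrC, scalar_apply, ← smul_one_eq_diagonal,
    Matrix.mul_smul, Matrix.mul_one]

end Matrix.SpecialLinearGroup

end

/-- For `A ∈ SL(2,ℂ)`, the transformation `X ↦ A X A*` on Hermitian matrices
corresponds (via `x ↦ X(x)`) to a Lorentz transformation of `ℝ^{1,3}`, i.e. it sends
`X(x)` to some `X(y)` with the same Minkowski norm; moreover `A₁, A₂` induce the same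
transformation if and only if `A₁ = ±A₂` (the two-to-one covering `SL(2,ℂ) → O(1,3)`). -/
theorem sl2c_lorentz_two_to_one :
    (∀ A : Matrix.SpecialLinearGroup (Fin 2) ℂ, ∀ x : Fin 4 → ℝ,
      ∃ y : Fin 4 → ℝ,
        (A : Matrix (Fin 2) (Fin 2) ℂ) * toMat x * (A : Matrix (Fin 2) (Fin 2) ℂ)ᴴ =
          toMat y ∧
        y 0 ^ 2 - y 1 ^ 2 - y 2 ^ 2 - y 3 ^ 2 = x 0 ^ 2 - x 1 ^ 2 - x 2 ^ 2 - x 3 ^ 2) ∧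
    (∀ A₁ A₂ : Matrix.SpecialLinearGroup (Fin 2) ℂ,
      (∀ X : Matrix (Fin 2) (Fin 2) ℂ, X.IsHermitian →
          (A₁ : Matrix (Fin 2) (Fin 2) ℂ) * X * (A₁ : Matrix (Fin 2) (Fin 2) ℂ)ᴴ =
          (A₂ : Matrix (Fin 2) (Fin 2) ℂ) * X * (A₂ : Matrix (Fin 2) (Fin 2) ℂ)ᴴ) ↔
        ((A₁ : Matrix (Fin 2) (Fin 2) ℂ) = (A₂ : Matrix (Fin 2) (Fin 2) ℂ) ∨
         (A₁ : Matrix (Fin 2) (Fin 2) ℂ) = -(A₂ : Matrix (Fin 2) (Fin 2) ℂ))) := by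
  refine ⟨fun A x => ?_, fun A₁ A₂ => ⟨fun h => ?_, ?_⟩⟩
  · obtain ⟨y, hy⟩ :=
      exists_toMat_eq_of_isHermitian (isHermitian_mul_mul_conjTranspose _ (isHermitian_toMat x))
    refine ⟨y, hy.symm, ?_⟩
    have hdet := A.det_mul_mul_conjTranspose (toMat x)
    rw [← hy, det_toMat, det_toMat] at hdet
    exact_mod_cast hdet
  · obtain ⟨r, hr, hA⟩ := SpecialLinearGroup.exists_eq_smul_of_forall_mul_mul_conjTranspose_eq
      (mul_mul_conjTranspose_eq_of_forall_isHermitian h)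
    rw [Fintype.card_fin, sq_eq_one_iff] at hr
    rcases hr with rfl | rfl
    · exact .inl (by rwa [one_smul] at hA)
    · exact .inr (by rwa [neg_one_smul] at hA)
  · rintro (h | h) X -
    · rw [h]
    · simp only [h, conjTranspose_neg, Matrix.neg_mul, Matrix.mul_neg, neg_neg]
end
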